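/- The 3×4 real matrix [[τξ₁, τξ₃ᵖ, τξ₁, −τξ₃ᵖ], [2μ_sξ₁² − ρ_sτ², 2μ_sξ₁ξ₃ᵖ, 2μ_sξ₁² − ρ_sτ², −2μ_sξ₁ξ₃ᵖ], [2μ_sξ₁ξ₃ˢ, −2μ_sξ₁² + ρ_sτ², −2μ_sξ₁ξ₃ˢ, −2μ_sξ₁² + ρ_sτ²]] has rank 3, i.e. the linear map ℝ⁴ → ℝ³ it defines is surjective. (Consequently, in the hyperbolic-hyperbolic region any acoustic wave configuration in the fluid can be produced by suitable incoming and outgoing elastic waves in the solid.) -/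

import Mathlib

/-!
Of the four columns of the control matrix, columns `0`, `1` and `3` form a `3 × 3` minor with
determinant `2 ρ_s τ³ ξ₃ᵖ (ρ_s τ² - 2 μ_s ξ₁²)`, independently of `ξ₃ˢ`. In the
hyperbolic-hyperbolic region `ξ₃ᵖ > 0`, and `(λ_s + 2 μ_s) ξ₁² < ρ_s τ²` forces
`2 μ_s ξ₁² < ρ_s τ²`, so this minor is invertible and the matrix is surjective.
-/

namespace Matrix

variable {m n R : Type*} [Fintype n]

theorem mul_submatrix_one_id [NonAssocSemiring R] [DecidableEq n] (B : Matrix m n R) (c : m → n) :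
    B * (1 : Matrix n n R).submatrix id c = B.submatrix id c := by
  ext k i
  simp [mul_apply, one_apply]

variable [Fintype m]

theorem mulVec_surjective_of_isUnit_submatrix [CommRing R] [DecidableEq m] [DecidableEq n]
    {B : Matrix m n R} (c : m → n) (h : IsUnit (B.submatrix id c)) :
    Function.Surjective B.mulVec := by
  intro v
  obtain ⟨w, hw⟩ := mulVec_surjective_iff_isUnit.mpr h v
  exact ⟨(1 : Matrix n n R).submatrix id c *ᵥ w, by
    rw [mulVec_mulVec, mul_submatrix_one_id, hw]⟩

theorem rank_eq_card_of_surjective_mulVec [CommSemiring R] [StrongRankCondition R]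
    {B : Matrix m n R} (h : Function.Surjective B.mulVec) : B.rank = Fintype.card m := by
  rw [rank, (LinearMap.range_eq_top (f := B.mulVecLin)).mpr h, finrank_top,
    Module.finrank_fintype_fun_eq_card]

end Matrix

theorem Real.sqrt_div_sq_sub_sq_pos {c t x : ℝ} (hc : 0 < c) (h : c ^ 2 * x ^ 2 < t ^ 2) :
    0 < √(t ^ 2 / c ^ 2 - x ^ 2) := by
  rw [Real.sqrt_pos, sub_pos, lt_div_iff₀ (by positivity)]
  linarith

/-- The matrix mapping the amplitudes of the incoming and outgoing pressure and shear waves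
in the solid to the interface data seen by the fluid. -/
def solidControlMatrix {R : Type*} [CommRing R] (μ ρ τ ξ₁ ξ₃s ξ₃p : R) :
    Matrix (Fin 3) (Fin 4) R :=
  !![τ * ξ₁, τ * ξ₃p, τ * ξ₁, -(τ * ξ₃p);
     2 * μ * ξ₁ ^ 2 - ρ * τ ^ 2, 2 * μ * ξ₁ * ξ₃p, 2 * μ * ξ₁ ^ 2 - ρ * τ ^ 2, -(2 * μ * ξ₁ * ξ₃p);
     2 * μ * ξ₁ * ξ₃s, -(2 * μ * ξ₁ ^ 2) + ρ * τ ^ 2, -(2 * μ * ξ₁ * ξ₃s), -(2 * μ * ξ₁ ^ 2) + ρ * τ ^ 2]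

theorem det_solidControlMatrix_submatrix {R : Type*} [CommRing R] (μ ρ τ ξ₁ ξ₃s ξ₃p : R) :
    ((solidControlMatrix μ ρ τ ξ₁ ξ₃s ξ₃p).submatrix id ![0, 1, 3]).det =
      2 * ρ * τ ^ 3 * ξ₃p * (ρ * τ ^ 2 - 2 * μ * ξ₁ ^ 2) := by
  simp only [solidControlMatrix, Matrix.det_fin_three, Matrix.submatrix_apply, id_eq,
    Matrix.of_apply, Matrix.cons_val', Matrix.cons_val_fin_one, Matrix.cons_val_zero,
    Matrix.cons_val_one, Matrix.cons_val]
  ring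

theorem control_fluid_from_solid_hyperbolic_hyperbolic_general
    (lams mus rhos : ℝ)
    (hlams : 0 < lams) (hmus : 0 < mus) (hrhos : 0 < rhos)
    (cp : ℝ)
    (hcp : cp = Real.sqrt ((lams + 2 * mus) / rhos))
    (ξ1 τ : ℝ) (hτ : τ ≠ 0)
    (hhp : cp ^ 2 * ξ1 ^ 2 < τ ^ 2)
    (ξ3s ξ3p : ℝ)
    (hξ3p : ξ3p = Real.sqrt (τ ^ 2 / cp ^ 2 - ξ1 ^ 2))
    (B : Matrix (Fin 3) (Fin 4) ℝ)
    (hB : B = !![τ * ξ1, τ * ξ3p, τ * ξ1, -(τ * ξ3p);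
                 2 * mus * ξ1 ^ 2 - rhos * τ ^ 2, 2 * mus * ξ1 * ξ3p,
                   2 * mus * ξ1 ^ 2 - rhos * τ ^ 2, -(2 * mus * ξ1 * ξ3p);
                 2 * mus * ξ1 * ξ3s, -(2 * mus * ξ1 ^ 2) + rhos * τ ^ 2,
                   -(2 * mus * ξ1 * ξ3s), -(2 * mus * ξ1 ^ 2) + rhos * τ ^ 2]) :
    B.rank = 3 ∧ Function.Surjective B.mulVec := by
  have hcp_pos : 0 < cp := by rw [hcp]; positivity
  have hξ3p_pos : 0 < ξ3p := hξ3p ▸ Real.sqrt_div_sq_sub_sq_pos hcp_pos hhp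
  have hpressure : (lams + 2 * mus) * ξ1 ^ 2 < rhos * τ ^ 2 := by
    rwa [hcp, Real.sq_sqrt (by positivity), div_mul_eq_mul_div, div_lt_iff₀ hrhos,
      mul_comm _ rhos] at hhp
  have hshear : 0 < rhos * τ ^ 2 - 2 * mus * ξ1 ^ 2 := by
    nlinarith [mul_nonneg hlams.le (sq_nonneg ξ1)]
  have hsurj : Function.Surjective B.mulVec := by
    refine Matrix.mulVec_surjective_of_isUnit_submatrix ![0, 1, 3] ?_
    rw [hB, Matrix.isUnit_iff_isUnit_det, isUnit_iff_ne_zero]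
    exact (det_solidControlMatrix_submatrix mus rhos τ ξ1 ξ3s ξ3p).trans_ne <| by
      simp [hrhos.ne', hτ, hξ3p_pos.ne', hshear.ne']
  exact ⟨Matrix.rank_eq_card_of_surjective_mulVec hsurj, hsurj⟩

/-- The 3×4 control matrix in the hyperbolic-hyperbolic region has
rank 3, i.e. defines a surjective linear map ℝ⁴ → ℝ³. -/
theorem control_fluid_from_solid_hyperbolic_hyperbolic
    (lams mus rhos lamf rhof : ℝ)
    (hlams : 0 < lams) (hmus : 0 < mus) (hrhos : 0 < rhos)
    (hlamf : 0 < lamf) (hrhof : 0 < rhof)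
    (cs cp cf : ℝ)
    (hcs : cs = Real.sqrt (mus / rhos))
    (hcp : cp = Real.sqrt ((lams + 2 * mus) / rhos))
    (hcf : cf = Real.sqrt (lamf / rhof))
    (ξ1 τ : ℝ) (hτ : τ ≠ 0)
    (hhp : cp ^ 2 * ξ1 ^ 2 < τ ^ 2)
    (hhf : cf ^ 2 * ξ1 ^ 2 < τ ^ 2)
    (ξ3s ξ3p ξ3f : ℝ)
    (hξ3s : ξ3s = Real.sqrt (τ ^ 2 / cs ^ 2 - ξ1 ^ 2))
    (hξ3p : ξ3p = Real.sqrt (τ ^ 2 / cp ^ 2 - ξ1 ^ 2))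
    (hξ3f : ξ3f = Real.sqrt (τ ^ 2 / cf ^ 2 - ξ1 ^ 2))
    (B : Matrix (Fin 3) (Fin 4) ℝ)
    (hB : B = !![τ * ξ1, τ * ξ3p, τ * ξ1, -(τ * ξ3p);
                 2 * mus * ξ1 ^ 2 - rhos * τ ^ 2, 2 * mus * ξ1 * ξ3p,
                   2 * mus * ξ1 ^ 2 - rhos * τ ^ 2, -(2 * mus * ξ1 * ξ3p);
                 2 * mus * ξ1 * ξ3s, -(2 * mus * ξ1 ^ 2) + rhos * τ ^ 2,
                   -(2 * mus * ξ1 * ξ3s), -(2 * mus * ξ1 ^ 2) + rhos * τ ^ 2]) :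
    B.rank = 3 ∧ Function.Surjective B.mulVec :=
  control_fluid_from_solid_hyperbolic_hyperbolic_general lams mus rhos hlams hmus hrhos cp hcp ξ1 τ
    hτ hhp ξ3s ξ3p hξ3p B hB
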